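/- Let α₁,…,α_n be nonzero integers, with α₁,…,α_k < 0 and α_{k+1},…,α_n > 0 (1 ≤ k ≤ n−1). The S¹-action on the zero level set {z ∈ S^{2n−1} : Σ α_i |z_i|² = 0} given by t · z = (e^{iα₁t}z₁, …, e^{iα_n t}z_n) is free if and only if each positive α_j is coprime to each negative α_i (i.e., gcd(|α_i|, α_j) = 1 for all i ≤ k < j). -/

import Mathlib

open scoped BigOperators

lemma exp_real_mul_I_eq_one {θ : ℝ} :
    Complex.exp ((θ : ℂ) * Complex.I) = 1 ↔ ∃ m : ℤ, θ = 2 * Real.pi * m := by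
  rw [Complex.exp_eq_one_iff]
  constructor
  · rintro ⟨m, hm⟩
    refine ⟨m, ?_⟩
    have h2 : (θ : ℂ) * Complex.I = ((m : ℂ) * (2 * Real.pi)) * Complex.I := by
      rw [hm]; ring
    have h3 : (θ : ℂ) = (m : ℂ) * (2 * Real.pi) :=
      mul_right_cancel₀ Complex.I_ne_zero h2
    have h4 : θ = (m : ℝ) * (2 * Real.pi) := by exact_mod_cast h3
    rw [h4]; ring
  · rintro ⟨m, hm⟩
    exact ⟨m, by rw [hm]; push_cast; ring⟩

/-- Let `α₁,…,α_n` be nonzero integers, `α₁,…,α_k < 0` and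
`α_{k+1},…,α_n > 0` (`1 ≤ k ≤ n−1`).  The `S¹`-action
`t · z = (e^{iα₁t} z₁, …, e^{iα_n t} z_n)` on the zero level set
`{z ∈ S^{2n−1} : Σ α_i |z_i|² = 0}` of the momentum map is free if and only if each positive
`α_j` is coprime to each negative `α_i`, i.e. `gcd(|α_i|, α_j) = 1` for all `i ≤ k < j`.
Freeness is expressed by: whenever `t ∈ ℝ` fixes a point of the level set, `t ∈ 2πℤ`. -/
theorem stmt_18 {n k : ℕ} (hk1 : 1 ≤ k) (hkn : k ≤ n - 1)
    (α : Fin n → ℤ) (hα : ∀ i, α i ≠ 0)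
    (hneg : ∀ i : Fin n, (i : ℕ) < k → α i < 0)
    (hpos : ∀ i : Fin n, k ≤ (i : ℕ) → 0 < α i) :
    (∀ z : Fin n → ℂ,
        (∑ i, ‖z i‖ ^ 2 = 1) →
        (∑ i, (α i : ℝ) * ‖z i‖ ^ 2 = 0) →
        ∀ t : ℝ,
          (∀ i, Complex.exp (((α i : ℝ) * t : ℝ) * Complex.I) * z i = z i) →
          ∃ m : ℤ, t = 2 * Real.pi * m)
      ↔ (∀ i j : Fin n, (i : ℕ) < k → k ≤ (j : ℕ) → Int.gcd (α i) (α j) = 1) := by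
  constructor
  · -- freeness → gcd condition
    intro hfree i j hik hkj
    have hij : i ≠ j := by
      intro h; rw [h] at hik; omega
    have hji : j ≠ i := Ne.symm hij
    set g : ℕ := Int.gcd (α i) (α j) with hg
    have hg0 : 0 < g := Int.gcd_pos_of_ne_zero_left _ (hα i)
    have hgR : (0:ℝ) < (g:ℝ) := by exact_mod_cast hg0
    have hai : (α i : ℝ) < 0 := by exact_mod_cast hneg i hik
    have haj : (0:ℝ) < (α j : ℝ) := by exact_mod_cast hpos j hkj
    have hd : (0:ℝ) < (α j : ℝ) - (α i : ℝ) := by linarith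
    set a : ℝ := (α j : ℝ) / ((α j : ℝ) - (α i : ℝ)) with ha
    set b : ℝ := (-(α i : ℝ)) / ((α j : ℝ) - (α i : ℝ)) with hb
    have hanneg : 0 ≤ a := le_of_lt (div_pos haj hd)
    have hbnneg : 0 ≤ b := le_of_lt (div_pos (by linarith) hd)
    set z : Fin n → ℂ := fun x =>
      if x = i then ((Real.sqrt a : ℝ) : ℂ) else if x = j then ((Real.sqrt b : ℝ) : ℂ) else 0
      with hz
    have habs : ∀ x, ‖z x‖ ^ 2 =
        (if x = i then a else 0) + (if x = j then b else 0) := by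
      intro x
      by_cases hxi : x = i
      · simp [hz, hxi, hij, Complex.norm_real, abs_of_nonneg (Real.sqrt_nonneg a),
          Real.sq_sqrt hanneg]
      · by_cases hxj : x = j
        · simp [hz, hxi, hxj, hji, Complex.norm_real, abs_of_nonneg (Real.sqrt_nonneg b),
            Real.sq_sqrt hbnneg]
        · simp [hz, hxi, hxj]
    have hs1 : ∑ x, ‖z x‖ ^ 2 = 1 := by
      simp only [habs]
      rw [Finset.sum_add_distrib, Finset.sum_ite_eq' Finset.univ i (fun _ => a),
        Finset.sum_ite_eq' Finset.univ j (fun _ => b)]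
      simp only [Finset.mem_univ, if_true]
      rw [ha, hb, ← add_div, div_eq_one_iff_eq hd.ne']
      ring
    have hs2 : ∑ x, (α x : ℝ) * ‖z x‖ ^ 2 = 0 := by
      have : ∀ x, (α x : ℝ) * ‖z x‖ ^ 2 =
          (if x = i then (α i : ℝ) * a else 0) + (if x = j then (α j : ℝ) * b else 0) := by
        intro x
        rw [habs x]
        by_cases hxi : x = i
        · simp [hxi, hij]
        · by_cases hxj : x = j
          · simp [hxi, hxj, hji]
          · simp [hxi, hxj]
      simp only [this]
      rw [Finset.sum_add_distrib, Finset.sum_ite_eq' Finset.univ i (fun _ => (α i : ℝ) * a),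
        Finset.sum_ite_eq' Finset.univ j (fun _ => (α j : ℝ) * b)]
      simp only [Finset.mem_univ, if_true]
      field_simp [ha, hb]
      ring
    set t : ℝ := 2 * Real.pi / (g : ℝ) with ht
    have hexp : ∀ x : Fin n, (g : ℤ) ∣ α x → Complex.exp (((α x : ℝ) * t : ℝ) * Complex.I) = 1 := by
      intro x hdvd
      rw [exp_real_mul_I_eq_one]
      obtain ⟨c, hc⟩ := hdvd
      refine ⟨c, ?_⟩
      have hcR : (α x : ℝ) = (g : ℝ) * (c : ℝ) := by exact_mod_cast hc
      rw [ht, hcR]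
      field_simp
    have hfix : ∀ x, Complex.exp (((α x : ℝ) * t : ℝ) * Complex.I) * z x = z x := by
      intro x
      by_cases hxi : x = i
      · rw [hxi, hexp i (Int.gcd_dvd_left _ _), one_mul]
      · by_cases hxj : x = j
        · rw [hxj, hexp j (Int.gcd_dvd_right _ _), one_mul]
        · have : z x = 0 := by simp [hz, hxi, hxj]
          rw [this, mul_zero]
    obtain ⟨m, hm⟩ := hfree z hs1 hs2 t hfix
    -- 2π/g = 2π m ⟹ g * m = 1 ⟹ g = 1
    have hpi : Real.pi ≠ 0 := Real.pi_ne_zero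
    have h1 : (g : ℝ) * (m : ℝ) = 1 := by
      rw [ht] at hm
      field_simp at hm
      nlinarith [hm, Real.pi_pos]
    have h2 : (g : ℤ) * m = 1 := by exact_mod_cast h1
    have : IsUnit (g : ℤ) := ⟨⟨(g : ℤ), m, h2, by rw [mul_comm]; exact h2⟩, rfl⟩
    rw [Int.isUnit_iff] at this
    rcases this with h | h
    · exact_mod_cast h
    · omega
  · -- gcd condition → freeness
    intro hgcd z hs1 hs2 t hfix
    have hzero_all : (∀ x : Fin n, z x = 0) → False := by
      intro h
      rw [Finset.sum_eq_zero (fun x _ => by rw [h x]; simp)] at hs1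
      exact one_ne_zero hs1.symm
    have hexists_neg : ∃ i : Fin n, (i : ℕ) < k ∧ z i ≠ 0 := by
      by_contra h
      push_neg at h
      have hnn : ∀ x ∈ Finset.univ, (0:ℝ) ≤ (α x : ℝ) * ‖z x‖ ^ 2 := by
        intro x _
        by_cases hx : (x : ℕ) < k
        · rw [h x hx]; simp
        · have : (0:ℝ) < (α x : ℝ) := by exact_mod_cast hpos x (le_of_not_gt hx)
          positivity
      have hz0 := (Finset.sum_eq_zero_iff_of_nonneg hnn).mp hs2
      apply hzero_all
      intro x
      by_cases hx : (x : ℕ) < k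
      · exact h x hx
      · have hx0 := hz0 x (Finset.mem_univ x)
        have haR : (α x : ℝ) ≠ 0 := by exact_mod_cast hα x
        have : ‖z x‖ ^ 2 = 0 := by
          rcases mul_eq_zero.mp hx0 with h' | h'
          · exact absurd h' haR
          · exact h'
        have : ‖z x‖ = 0 := by nlinarith [norm_nonneg (z x)]
        exact norm_eq_zero.mp this
    have hexists_pos : ∃ j : Fin n, k ≤ (j : ℕ) ∧ z j ≠ 0 := by
      by_contra h
      push_neg at h
      have hnp : ∀ x ∈ Finset.univ, (α x : ℝ) * ‖z x‖ ^ 2 ≤ 0 := by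
        intro x _
        by_cases hx : k ≤ (x : ℕ)
        · rw [h x hx]; simp
        · have : (α x : ℝ) < 0 := by exact_mod_cast hneg x (lt_of_not_ge hx)
          nlinarith [sq_nonneg (‖z x‖)]
      have hz0 : ∀ x ∈ Finset.univ, (α x : ℝ) * ‖z x‖ ^ 2 = 0 := by
        have := (Finset.sum_eq_zero_iff_of_nonneg (fun x hx => neg_nonneg.mpr (hnp x hx))).mp
          (by rw [Finset.sum_neg_distrib, hs2, neg_zero])
        intro x hx
        have := this x hx
        linarith [this]
      apply hzero_all
      intro x
      by_cases hx : k ≤ (x : ℕ)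
      · exact h x hx
      · have hx0 := hz0 x (Finset.mem_univ x)
        have haR : (α x : ℝ) ≠ 0 := by exact_mod_cast hα x
        have : ‖z x‖ ^ 2 = 0 := by
          rcases mul_eq_zero.mp hx0 with h' | h'
          · exact absurd h' haR
          · exact h'
        have : ‖z x‖ = 0 := by nlinarith [norm_nonneg (z x)]
        exact norm_eq_zero.mp this
    obtain ⟨i, hik, hzi⟩ := hexists_neg
    obtain ⟨j, hkj, hzj⟩ := hexists_pos
    have hei : Complex.exp (((α i : ℝ) * t : ℝ) * Complex.I) = 1 :=
      mul_right_cancel₀ hzi (by rw [one_mul]; exact hfix i)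
    have hej : Complex.exp (((α j : ℝ) * t : ℝ) * Complex.I) = 1 :=
      mul_right_cancel₀ hzj (by rw [one_mul]; exact hfix j)
    obtain ⟨a, hma⟩ := exp_real_mul_I_eq_one.mp hei
    obtain ⟨b, hmb⟩ := exp_real_mul_I_eq_one.mp hej
    have hcop : IsCoprime (α i) (α j) :=
      Int.isCoprime_iff_gcd_eq_one.mpr (hgcd i j hik hkj)
    obtain ⟨u, v, huv⟩ := hcop
    refine ⟨u * a + v * b, ?_⟩
    have hcR : (u : ℝ) * (α i : ℝ) + (v : ℝ) * (α j : ℝ) = 1 := by exact_mod_cast huv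
    push_cast
    linear_combination (u : ℝ) * hma + (v : ℝ) * hmb - t * hcR
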